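/- For every t with |t| ≤ π, |Ŵ₂(t)| ≤ 2(d+1)|e^{it} − 1|. -/

import Mathlib

open Complex

noncomputable section

/-- `e^{a i t}` -/
def expi (a : ℂ) (t : ℝ) : ℂ := Complex.exp (a * Complex.I * (t : ℂ))

/-- `e^{it}` -/
def eit (t : ℝ) : ℂ := expi 1 t

/-- `D̂(t) = (1 − γ + βe^{it})² − 4e^{it}(β − γ(1−α))` -/
def Dhat (α β γ : ℝ) (t : ℝ) : ℂ :=
  (1 - (γ : ℂ) + (β : ℂ) * eit t) ^ 2 - 4 * eit t * ((β : ℂ) - (γ : ℂ) * (1 - (α : ℂ)))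

/-- The square root of `D̂(t)` with positive real part (junk value `0` if none exists). -/
def sqrtD (α β γ : ℝ) (t : ℝ) : ℂ :=
  letI := Classical.propDecidable (∃ s : ℂ, s ^ 2 = Dhat α β γ t ∧ 0 < s.re)
  if h : ∃ s : ℂ, s ^ 2 = Dhat α β γ t ∧ 0 < s.re then h.choose else 0

def Lam1 (α β γ : ℝ) (t : ℝ) : ℂ := (1 - (γ : ℂ) + (β : ℂ) * eit t + sqrtD α β γ t) / 2

def Lam2 (α β γ : ℝ) (t : ℝ) : ℂ := (1 - (γ : ℂ) + (β : ℂ) * eit t - sqrtD α β γ t) / 2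

/-- Common numerator of `Ŵ₁, Ŵ₂, V̂, V̂₁, V̂₂` with `L` in place of `Λ_j` (resp. `Δ̂`). -/
def Wnum (α β γ : ℝ) (d : ℕ) (L : ℂ) (t : ℝ) : ℂ :=
  (expi ((d : ℂ) + 1) t - 1) * ((β : ℂ) - (γ : ℂ) * (1 - (α : ℂ)))
    - (expi (d : ℂ) t - 1) * L
    + (eit t - 1) * ((γ : ℂ) * L - (β : ℂ) + (γ : ℂ) * (1 - (α : ℂ)))

def W1denom (α β γ : ℝ) (d : ℕ) (t : ℝ) : ℂ :=
  (Lam1 α β γ t - expi (d : ℂ) t) * sqrtD α β γ t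

def W2denom (α β γ : ℝ) (d : ℕ) (t : ℝ) : ℂ :=
  -((Lam2 α β γ t - expi (d : ℂ) t) * sqrtD α β γ t)

def W1 (α β γ : ℝ) (d : ℕ) (t : ℝ) : ℂ :=
  Wnum α β γ d (Lam1 α β γ t) t / W1denom α β γ d t

def W2 (α β γ : ℝ) (d : ℕ) (t : ℝ) : ℂ :=
  Wnum α β γ d (Lam2 α β γ t) t / W2denom α β γ d t

def W3denom (α β γ : ℝ) (d : ℕ) (t : ℝ) : ℂ :=
  (expi ((d : ℂ) - 1) t - (β : ℂ)) * (expi (d : ℂ) t - (1 - (γ : ℂ)))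
    - (γ : ℂ) * (1 - (α : ℂ) - (β : ℂ))

def W3 (α β γ : ℝ) (d : ℕ) (t : ℝ) : ℂ :=
  (α : ℂ) * (γ : ℂ) * expi (d : ℂ) t / W3denom α β γ d t

def Hhat (β : ℝ) (t : ℝ) : ℂ := (1 - (β : ℂ)) * eit t / (1 - (β : ℂ) * eit t)

def Psihat (α β : ℝ) (t : ℝ) : ℂ :=
  (1 - (α : ℂ) - (β : ℂ)) * eit t / (1 - (β : ℂ) * eit t)

def A1 (α β γ : ℝ) (t : ℝ) : ℂ :=
  (1 - (β : ℂ)) * (Psihat α β t - 1) / (1 + (γ : ℂ) - (β : ℂ))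

def A2 (α β γ : ℝ) (t : ℝ) : ℂ :=
  -((β : ℂ) * (1 - (β : ℂ)) * (Hhat β t - 1) * (Psihat α β t - 1)) / (1 + (γ : ℂ) - (β : ℂ)) ^ 2

def A3 (α β γ : ℝ) (t : ℝ) : ℂ :=
  (β : ℂ) ^ 2 * (1 - (β : ℂ)) * (Hhat β t - 1) ^ 2 * (Psihat α β t - 1)
    / (1 + (γ : ℂ) - (β : ℂ)) ^ 3

def A4 (α β γ : ℝ) (t : ℝ) : ℂ :=
  -((1 - (β : ℂ)) ^ 3 * (Psihat α β t - 1) ^ 2)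
    / ((1 + (γ : ℂ) - (β : ℂ)) ^ 3 * (1 - (β : ℂ) * eit t))

def A5 (α β γ : ℝ) (t : ℝ) : ℂ :=
  3 * (β : ℂ) * (1 - (β : ℂ)) ^ 3 * (Psihat α β t - 1) ^ 2 * (Hhat β t - 1)
    / ((1 + (γ : ℂ) - (β : ℂ)) ^ 4 * (1 - (β : ℂ) * eit t))

def A6 (α β γ : ℝ) (t : ℝ) : ℂ :=
  2 * (1 - (β : ℂ)) ^ 5 * (Psihat α β t - 1) ^ 3
    / ((1 + (γ : ℂ) - (β : ℂ)) ^ 5 * (1 - (β : ℂ) * eit t) ^ 2)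

def Ahat (α β γ : ℝ) (t : ℝ) : ℂ :=
  1 + A1 α β γ t * (γ : ℂ) + (A2 α β γ t + A4 α β γ t) * (γ : ℂ) ^ 2
    + (A3 α β γ t + A5 α β γ t + A6 α β γ t) * (γ : ℂ) ^ 3

def DeltaHat (α β γ : ℝ) (t : ℝ) : ℂ := 1 + A1 α β γ t * (γ : ℂ)

def Delta1Hat (α β γ : ℝ) (t : ℝ) : ℂ :=
  1 + A1 α β γ t * (γ : ℂ) + (A2 α β γ t + A4 α β γ t) * (γ : ℂ) ^ 2

def Ghat (α β γ : ℝ) (t : ℝ) : ℂ :=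
  Complex.exp (Ahat α β γ t - 1
    - (A1 α β γ t ^ 2 * (γ : ℂ) ^ 2
        + 2 * A1 α β γ t * (A2 α β γ t + A4 α β γ t) * (γ : ℂ) ^ 3) / 2
    + A1 α β γ t ^ 3 * (γ : ℂ) ^ 3 / 3)

def G1hat (α β γ : ℝ) (t : ℝ) : ℂ :=
  Complex.exp (A1 α β γ t * (γ : ℂ)
    + (A2 α β γ t + A4 α β γ t - A1 α β γ t ^ 2 / 2) * (γ : ℂ) ^ 2)

def Vhat (α β γ : ℝ) (d : ℕ) (t : ℝ) : ℂ :=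
  Wnum α β γ d (DeltaHat α β γ t) t /
    ((Ahat α β γ t - expi (d : ℂ) t)
      * (2 * DeltaHat α β γ t - 1 + (γ : ℂ) - (β : ℂ) * eit t))

def V1hat (α β γ : ℝ) (d : ℕ) (t : ℝ) : ℂ :=
  Wnum α β γ d (DeltaHat α β γ t) t /
    ((Delta1Hat α β γ t - expi (d : ℂ) t)
      * (2 * DeltaHat α β γ t - 1 + (γ : ℂ) - (β : ℂ) * eit t))

def V2hat (α β γ : ℝ) (d : ℕ) (t : ℝ) : ℂ :=
  Wnum α β γ d (DeltaHat α β γ t) t /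
    ((Delta1Hat α β γ t - expi (d : ℂ) t)
      * (2 * Delta1Hat α β γ t - 1 + (γ : ℂ) - (β : ℂ) * eit t))

/-- `f(1) = 0, f(2) = 1, f(3) = d` (states indexed `0,1,2`). -/
def fval (d : ℕ) : Fin 3 → ℤ := ![0, 1, (d : ℤ)]

/-- Transition matrix of the Markov chain. -/
def Pmat (α β γ : ℝ) : Fin 3 → Fin 3 → ℝ :=
  ![![1 - γ, γ, 0], ![1 - α - β, β, α], ![0, 0, 1]]

/-- The path `(ξ₀, ξ₁, …, ξ_n)` obtained by prepending the initial (healthy) state. -/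
def path (n : ℕ) (s : Fin n → Fin 3) : Fin (n + 1) → Fin 3 := Fin.cons 0 s

/-- `F_n{m}`: the mass the distribution of `f(ξ₁) + ⋯ + f(ξ_n)` puts on `m`,
for the chain started at the healthy state `0`. -/
def Fmass (α β γ : ℝ) (d n : ℕ) (m : ℤ) : ℝ :=
  ∑ s ∈ Finset.univ.filter (fun s : Fin n → Fin 3 => (∑ k, fval d (s k)) = m),
    ∏ k : Fin n, Pmat α β γ (path n s k.castSucc) (path n s k.succ)

/-- The characteristic function `Σ_{m ∈ ℤ} F_n{m} e^{imt}` of `F_n`. -/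
def charFn (α β γ : ℝ) (d n : ℕ) (t : ℝ) : ℂ :=
  ∑' m : ℤ, (Fmass α β γ d n m : ℂ) * expi (m : ℂ) t

/-- Mass at `k ∈ ℤ` of the signed measure associated with the Fourier transform `Mhat`. -/
def massOf (Mhat : ℝ → ℂ) (k : ℤ) : ℂ :=
  (1 / (2 * Real.pi)) *
    ∫ t in (-Real.pi)..Real.pi, Complex.exp (-(k : ℂ) * Complex.I * (t : ℂ)) * Mhat t

/-- Fourier transform of the signed measure `GⁿV + E`. -/
def approxGnVE (α β γ : ℝ) (d n : ℕ) (t : ℝ) : ℂ :=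
  Ghat α β γ t ^ n * Vhat α β γ d t + expi ((n : ℂ) * (d : ℂ)) t * W3 α β γ d t

/-- Fourier transform of the signed measure `G₁ⁿV₁ + E`. -/
def approxG1nV1E (α β γ : ℝ) (d n : ℕ) (t : ℝ) : ℂ :=
  G1hat α β γ t ^ n * V1hat α β γ d t + expi ((n : ℂ) * (d : ℂ)) t * W3 α β γ d t

/-- Fourier transform of the signed measure `G₁ⁿV₂ + E`. -/
def approxG1nV2E (α β γ : ℝ) (d n : ℕ) (t : ℝ) : ℂ :=
  G1hat α β γ t ^ n * V2hat α β γ d t + expi ((n : ℂ) * (d : ℂ)) t * W3 α β γ d t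

/-- Fourier transform of the signed measure `E`. -/
def approxE (α β γ : ℝ) (d n : ℕ) (t : ℝ) : ℂ :=
  expi ((n : ℂ) * (d : ℂ)) t * W3 α β γ d t

/-- Mass at `k` of the difference `F_n − M`, where `M` has Fourier transform `Mhat`. -/
def diffMass (α β γ : ℝ) (d n : ℕ) (Mhat : ℝ → ℂ) (k : ℤ) : ℂ :=
  (Fmass α β γ d n k : ℂ) - massOf Mhat k

/-- Condition (C) of the paper. -/
def condC (C₀ α β γ : ℝ) : Prop :=
  0 < α ∧ α < 1 ∧ 0 < β ∧ β < 1 ∧ 0 < γ ∧ γ < 1 ∧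
    β ≤ 0.15 ∧ γ ≤ 0.05 ∧ α ≤ C₀ ∧ α + β < 1

/-!
Put `z = e^{it}` and `c = β − γ(1 − α)`. By Vieta `Λ₁Λ₂ = zc`, and `Re Λ₁ ≥ 0.4` because `√D̂` has
positive real part, so `|Λ₂| ≤ 0.15 / 0.4`. Writing `D̂ = (1 − γ − βz)² + 4γz(1 − α − β)` gives
`|D̂| ≥ 0.8² − 0.2`, hence `|√D̂| ≥ 0.66` and the denominator of `Ŵ₂` has modulus at least
`0.625 · 0.66`. The numerator is `z − 1` times a combination of geometric sums in `z`, of modulus at most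
`0.525 d + 0.32 ≤ 0.825 (d + 1)`. If `D̂` has no root with positive real part, `sqrtD` is `0` and so is `Ŵ₂`.
-/

lemma norm_geom_sum_le_of_norm_le_one {𝕜 : Type*} [NormedDivisionRing 𝕜] {z : 𝕜} (hz : ‖z‖ ≤ 1)
    (n : ℕ) : ‖∑ j ∈ Finset.range n, z ^ j‖ ≤ n := by
  calc ‖∑ j ∈ Finset.range n, z ^ j‖ ≤ ∑ _j ∈ Finset.range n, (1 : ℝ) :=
        norm_sum_le_of_le _ fun j _ => by
          rw [norm_pow]; exact pow_le_one₀ (norm_nonneg z) hz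
    _ = n := by simp

lemma norm_eit (t : ℝ) : ‖eit t‖ = 1 := by
  simp [eit, expi, Complex.norm_exp]

lemma abs_re_eit_le_one (t : ℝ) : |(eit t).re| ≤ 1 :=
  (Complex.abs_re_le_norm _).trans (norm_eit t).le

lemma expi_natCast (n : ℕ) (t : ℝ) : expi n t = eit t ^ n := by
  rw [eit, expi, expi, ← Complex.exp_nat_mul]
  ring_nf

lemma sqrtD_spec_or_eq_zero (α β γ t : ℝ) :
    (sqrtD α β γ t ^ 2 = Dhat α β γ t ∧ 0 < (sqrtD α β γ t).re) ∨ sqrtD α β γ t = 0 := by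
  by_cases h : ∃ s : ℂ, s ^ 2 = Dhat α β γ t ∧ 0 < s.re
  · left
    rw [sqrtD, dif_pos h]
    exact h.choose_spec
  · right
    rw [sqrtD, dif_neg h]

lemma W2_eq_zero_of_sqrtD_eq_zero {α β γ t : ℝ} (d : ℕ) (h : sqrtD α β γ t = 0) :
    W2 α β γ d t = 0 := by
  simp [W2, W2denom, h]

lemma norm_sub_mul_one_sub_le {α β γ : ℝ} (hα : 0 ≤ α) (hβ : 0 ≤ β) (hγ : 0 ≤ γ) (hβ15 : β ≤ 0.15)
    (hγ05 : γ ≤ 0.05) (hαβ : α + β ≤ 1) : ‖(β : ℂ) - γ * (1 - α)‖ ≤ 0.15 := by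
  have hc : (β : ℂ) - γ * (1 - α) = ((β - γ * (1 - α) : ℝ) : ℂ) := by push_cast; ring
  rw [hc, Complex.norm_real, Real.norm_eq_abs, abs_le]
  constructor <;> nlinarith

lemma Lam1_mul_Lam2 {α β γ t : ℝ} (hs : sqrtD α β γ t ^ 2 = Dhat α β γ t) :
    Lam1 α β γ t * Lam2 α β γ t = eit t * ((β : ℂ) - γ * (1 - α)) := by
  rw [Lam1, Lam2, Dhat] at *
  linear_combination (-1 / 4 : ℂ) * hs

lemma Dhat_eq_sq_add (α β γ t : ℝ) :
    Dhat α β γ t = (1 - (γ : ℂ) - β * eit t) ^ 2 + 4 * γ * eit t * (1 - α - β) := by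
  rw [Dhat]; ring

lemma le_re_Lam1 {α β γ t : ℝ} (hβ : 0 ≤ β) (hβ15 : β ≤ 0.15) (hγ05 : γ ≤ 0.05)
    (hs : 0 < (sqrtD α β γ t).re) : 0.4 ≤ (Lam1 α β γ t).re := by
  have hz := (abs_le.mp (abs_re_eit_le_one t)).1
  have hre : (Lam1 α β γ t).re = (1 - γ + β * (eit t).re + (sqrtD α β γ t).re) / 2 := by
    simp [Lam1]
  rw [hre]
  nlinarith

lemma norm_Lam2_le {α β γ t : ℝ} (hα : 0 ≤ α) (hβ : 0 ≤ β) (hγ : 0 ≤ γ) (hβ15 : β ≤ 0.15)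
    (hγ05 : γ ≤ 0.05) (hαβ : α + β ≤ 1)
    (hs : sqrtD α β γ t ^ 2 = Dhat α β γ t) (hs_re : 0 < (sqrtD α β γ t).re) :
    ‖Lam2 α β γ t‖ ≤ 0.375 := by
  have hL1 : 0.4 ≤ ‖Lam1 α β γ t‖ :=
    (le_re_Lam1 hβ hβ15 hγ05 hs_re).trans (Complex.re_le_norm _)
  have hprod := congrArg norm (Lam1_mul_Lam2 hs)
  rw [norm_mul, norm_mul, norm_eit, one_mul] at hprod
  have hc := norm_sub_mul_one_sub_le hα hβ hγ hβ15 hγ05 hαβ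
  nlinarith [norm_nonneg (Lam2 α β γ t)]

lemma le_norm_Dhat {α β γ t : ℝ} (hα : 0 ≤ α) (hβ : 0 ≤ β) (hγ : 0 ≤ γ) (hβ15 : β ≤ 0.15)
    (hγ05 : γ ≤ 0.05) (hαβ : α + β ≤ 1) : 0.44 ≤ ‖Dhat α β γ t‖ := by
  have hz := abs_le.mp (abs_re_eit_le_one t)
  have hmain : 0.8 ≤ ‖1 - (γ : ℂ) - β * eit t‖ := by
    refine le_trans ?_ (Complex.re_le_norm _)
    simp only [sub_re, one_re, ofReal_re, re_ofReal_mul]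
    nlinarith
  have hpert : ‖4 * (γ : ℂ) * eit t * (1 - α - β)‖ ≤ 0.2 := by
    have h : 4 * (γ : ℂ) * eit t * (1 - α - β) = eit t * ((4 * γ * (1 - α - β) : ℝ) : ℂ) := by
      push_cast; ring
    rw [h, norm_mul, norm_eit, one_mul, Complex.norm_real, Real.norm_eq_abs, abs_le]
    constructor <;> nlinarith
  rw [Dhat_eq_sq_add]
  calc (0.44 : ℝ) ≤ ‖1 - (γ : ℂ) - β * eit t‖ ^ 2 - ‖4 * (γ : ℂ) * eit t * (1 - α - β)‖ := by
        nlinarith [hz.1, hz.2]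
    _ ≤ _ := by
        have := norm_sub_norm_le ((1 - (γ : ℂ) - β * eit t) ^ 2)
          (-(4 * (γ : ℂ) * eit t * (1 - α - β)))
        rwa [sub_neg_eq_add, norm_neg, norm_pow] at this

lemma le_norm_W2denom {α β γ t : ℝ} (hα : 0 ≤ α) (hβ : 0 ≤ β) (hγ : 0 ≤ γ) (hβ15 : β ≤ 0.15)
    (hγ05 : γ ≤ 0.05) (hαβ : α + β ≤ 1) (d : ℕ)
    (hs : sqrtD α β γ t ^ 2 = Dhat α β γ t) (hs_re : 0 < (sqrtD α β γ t).re) :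
    0.4125 ≤ ‖W2denom α β γ d t‖ := by
  have hsnorm : 0.66 ≤ ‖sqrtD α β γ t‖ := by
    have hD := le_norm_Dhat (t := t) hα hβ hγ hβ15 hγ05 hαβ
    rw [← hs, norm_pow] at hD
    nlinarith [norm_nonneg (sqrtD α β γ t)]
  have hdiff : 0.625 ≤ ‖Lam2 α β γ t - expi d t‖ := by
    have hL2 := norm_Lam2_le hα hβ hγ hβ15 hγ05 hαβ hs hs_re
    have := norm_sub_norm_le (expi d t) (Lam2 α β γ t)
    rw [expi_natCast] at this ⊢
    rw [norm_pow, norm_eit, one_pow, norm_sub_rev] at this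
    linarith
  rw [W2denom, norm_neg, norm_mul]
  nlinarith [norm_nonneg (Lam2 α β γ t - expi d t)]

lemma Wnum_eq_mul (α β γ : ℝ) (d : ℕ) (L : ℂ) (t : ℝ) :
    Wnum α β γ d L t = (eit t - 1) *
      ((∑ j ∈ Finset.range (d + 1), eit t ^ j) * ((β : ℂ) - γ * (1 - α))
        - (∑ j ∈ Finset.range d, eit t ^ j) * L + (γ * L - ((β : ℂ) - γ * (1 - α)))) := by
  have hd1 : expi ((d : ℂ) + 1) t = eit t ^ (d + 1) := by
    rw [← expi_natCast]; push_cast; rfl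
  rw [Wnum, hd1, expi_natCast]
  linear_combination (-((β : ℂ) - γ * (1 - α))) * geom_sum_mul (eit t) (d + 1)
    + L * geom_sum_mul (eit t) d

lemma norm_Wnum_le {α β γ : ℝ} (hα : 0 ≤ α) (hβ : 0 ≤ β) (hγ : 0 ≤ γ) (hβ15 : β ≤ 0.15)
    (hγ05 : γ ≤ 0.05) (hαβ : α + β ≤ 1) (d : ℕ) (L : ℂ) (t : ℝ) :
    ‖Wnum α β γ d L t‖ ≤ ‖eit t - 1‖ * (0.15 * (d + 1) + (d + 0.05) * ‖L‖ + 0.15) := by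
  set c : ℂ := (β : ℂ) - γ * (1 - α)
  have hc : ‖c‖ ≤ 0.15 := norm_sub_mul_one_sub_le hα hβ hγ hβ15 hγ05 hαβ
  have hz : ‖eit t‖ ≤ 1 := (norm_eit t).le
  have hS₁ := norm_geom_sum_le_of_norm_le_one hz (d + 1)
  have hS₂ := norm_geom_sum_le_of_norm_le_one hz d
  have hγ' : ‖(γ : ℂ)‖ ≤ 0.05 := by rwa [Complex.norm_real, Real.norm_of_nonneg hγ]
  rw [Wnum_eq_mul, norm_mul]
  gcongr
  calc _ ≤ ‖(∑ j ∈ Finset.range (d + 1), eit t ^ j)‖ * ‖c‖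
        + ‖∑ j ∈ Finset.range d, eit t ^ j‖ * ‖L‖ + (‖(γ : ℂ)‖ * ‖L‖ + ‖c‖) := by
        grw [norm_add_le, norm_sub_le, norm_sub_le, norm_mul, norm_mul, norm_mul]
    _ ≤ _ := by
        push_cast at hS₁
        have hL := norm_nonneg L
        nlinarith [mul_le_mul hS₁ hc (norm_nonneg _) (by positivity),
          mul_le_mul_of_nonneg_right hS₂ hL, mul_le_mul_of_nonneg_right hγ' hL]

theorem stmt4_general (C₀ : ℝ) (α β γ : ℝ) (h : condC C₀ α β γ) (d : ℕ) (t : ℝ) :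
    ‖W2 α β γ d t‖ ≤ 2 * ((d : ℝ) + 1) * ‖eit t - 1‖ := by
  obtain ⟨hα, -, hβ, -, hγ, -, hβ15, hγ05, -, hαβ⟩ := h
  rcases sqrtD_spec_or_eq_zero α β γ t with ⟨hs, hs_re⟩ | hs
  · have hden := le_norm_W2denom hα.le hβ.le hγ.le hβ15 hγ05 hαβ.le d hs hs_re
    have hL2 := norm_Lam2_le hα.le hβ.le hγ.le hβ15 hγ05 hαβ.le hs hs_re
    have hnum := norm_Wnum_le hα.le hβ.le hγ.le hβ15 hγ05 hαβ.le d (Lam2 α β γ t) t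
    rw [W2, norm_div, div_le_iff₀ (by linarith)]
    calc _ ≤ ‖eit t - 1‖ * (0.15 * (d + 1) + (d + 0.05) * 0.375 + 0.15) := by
          grw [hnum, hL2]
      _ ≤ ‖eit t - 1‖ * (2 * (d + 1) * 0.4125) := by
          gcongr; linarith
      _ = 2 * (d + 1) * ‖eit t - 1‖ * 0.4125 := by ring
      _ ≤ _ := by gcongr
  · rw [W2_eq_zero_of_sqrtD_eq_zero d hs, norm_zero]
    positivity

/-- `|Ŵ₂(t)| ≤ 2(d+1)|e^{it} − 1|`. -/
theorem stmt4 (C₀ : ℝ) (hC₀ : C₀ ∈ Set.Ioo (0 : ℝ) 1)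
    (α β γ : ℝ) (h : condC C₀ α β γ) (d : ℕ) (hd : 1 ≤ d)
    (t : ℝ) (ht : |t| ≤ Real.pi) :
    ‖W2 α β γ d t‖ ≤ 2 * ((d : ℝ) + 1) * ‖eit t - 1‖ :=
  stmt4_general C₀ α β γ h d t
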